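/- arXiv:2008.00144 — 4 statements merged into one kernel-verified Lean document; each statement's English description precedes it below -/
import Mathlib

section
/- Suppose 0 < a < x, Δτ > 0, and the expectation E[T_a] equals a·∫₀^∞ exp(−(2xy + y²)/(2Δτ)) dy. Then 1/(1 + x⁻²·Δτ) ≤ E[T_a]/((a/x)·Δτ) ≤ 1. -/
/-!
Completing the square, `2xy + y² = (y + x)² - x²`, turns the integral into
`exp (x² / 2Δτ) * ∫ u in Ioi x, exp (-u² / 2Δτ)`, so both bounds are Mills' ratio for a
centred Gaussian of variance `s = Δτ` at `c = x`. For the upper bound, `u / c ≥ 1` on `(c, ∞)`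
and `u * exp (-u² / 2s)` has the antiderivative `-s * exp (-u² / 2s)`. For the lower bound,
`-s * exp (-u² / 2s) / u` has derivative `(1 + s / u²) * exp (-u² / 2s)`, which is at most
`(1 + s / c²) * exp (-u² / 2s)` on `(c, ∞)`.
-/

open Set Real MeasureTheory Filter Topology

lemma setIntegral_Ioi_comp_add_right {E : Type*} [NormedAddCommGroup E] [NormedSpace ℝ E]
    (f : ℝ → E) (a x : ℝ) : ∫ y in Ioi a, f (y + x) = ∫ u in Ioi (a + x), f u := by
  have h := (measurePreserving_add_right volume x).setIntegral_preimage_emb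
    (measurableEmbedding_addRight x) f (Ioi (a + x))
  rwa [preimage_add_const_Ioi, add_sub_cancel_right] at h

section GaussianTail

variable {s c : ℝ}

lemma integrableOn_exp_neg_sq_div (hs : 0 < s) (c : ℝ) :
    IntegrableOn (fun u ↦ exp (-u ^ 2 / (2 * s))) (Ioi c) := by
  have h := integrable_exp_neg_mul_sq (inv_pos.2 (mul_pos two_pos hs))
  refine (h.congr (ae_of_all _ fun u ↦ ?_)).integrableOn
  ring_nf

lemma hasDerivAt_exp_neg_sq_div (hs : s ≠ 0) (u : ℝ) :
    HasDerivAt (fun u ↦ exp (-u ^ 2 / (2 * s))) (-(u / s) * exp (-u ^ 2 / (2 * s))) u := by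
  have h : HasDerivAt (fun u ↦ -u ^ 2 / (2 * s)) (-(u / s)) u := by
    refine (((hasDerivAt_pow 2 u).fun_neg).div_const (2 * s)).congr_deriv ?_
    field_simp
    ring
  simpa only [mul_comm] using h.exp

lemma tendsto_exp_neg_sq_div_atTop (hs : 0 < s) :
    Tendsto (fun u ↦ exp (-u ^ 2 / (2 * s))) atTop (𝓝 0) := by
  refine tendsto_exp_atBot.comp ?_
  simp only [neg_div]
  exact tendsto_neg_atTop_atBot.comp
    ((tendsto_pow_atTop two_ne_zero).atTop_div_const (mul_pos two_pos hs))

theorem mul_integral_exp_neg_sq_div_le (hs : 0 < s) (hc : 0 < c) :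
    c * ∫ u in Ioi c, exp (-u ^ 2 / (2 * s)) ≤ s * exp (-c ^ 2 / (2 * s)) := by
  have hderiv : ∀ u ∈ Ici c,
      HasDerivAt (fun u ↦ -s * exp (-u ^ 2 / (2 * s))) (u * exp (-u ^ 2 / (2 * s))) u :=
    fun u _ ↦ ((hasDerivAt_exp_neg_sq_div hs.ne' u).const_mul (-s)).congr_deriv
      (by field_simp)
  have hpos : ∀ u ∈ Ioi c, 0 ≤ u * exp (-u ^ 2 / (2 * s)) := fun u hu ↦
    mul_nonneg (hc.trans hu).le (exp_pos _).le
  have hlim : Tendsto (fun u ↦ -s * exp (-u ^ 2 / (2 * s))) atTop (𝓝 0) := by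
    simpa using (tendsto_exp_neg_sq_div_atTop hs).const_mul (-s)
  calc c * ∫ u in Ioi c, exp (-u ^ 2 / (2 * s))
      = ∫ u in Ioi c, c * exp (-u ^ 2 / (2 * s)) := (integral_const_mul c _).symm
    _ ≤ ∫ u in Ioi c, u * exp (-u ^ 2 / (2 * s)) :=
        setIntegral_mono_on ((integrableOn_exp_neg_sq_div hs c).const_mul c)
          (integrableOn_Ioi_deriv_of_nonneg' hderiv hpos hlim) measurableSet_Ioi
          fun u hu ↦ mul_le_mul_of_nonneg_right hu.le (exp_pos _).le
    _ = s * exp (-c ^ 2 / (2 * s)) := by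
        rw [integral_Ioi_of_hasDerivAt_of_nonneg' hderiv hpos hlim]
        ring

theorem div_le_mul_integral_exp_neg_sq_div (hs : 0 < s) (hc : 0 < c) :
    s * exp (-c ^ 2 / (2 * s)) / c ≤
      (1 + s / c ^ 2) * ∫ u in Ioi c, exp (-u ^ 2 / (2 * s)) := by
  have hderiv : ∀ u ∈ Ici c, HasDerivAt (fun u ↦ -s * exp (-u ^ 2 / (2 * s)) / u)
      ((1 + s / u ^ 2) * exp (-u ^ 2 / (2 * s))) u := fun u hu ↦ by
    have hu : u ≠ 0 := (hc.trans_le hu).ne'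
    refine (((hasDerivAt_exp_neg_sq_div hs.ne' u).const_mul (-s)).div (hasDerivAt_id' u)
      hu).congr_deriv ?_
    field_simp
    ring
  have hpos : ∀ u ∈ Ioi c, 0 ≤ (1 + s / u ^ 2) * exp (-u ^ 2 / (2 * s)) := fun u _ ↦ by
    positivity
  have hlim : Tendsto (fun u ↦ -s * exp (-u ^ 2 / (2 * s)) / u) atTop (𝓝 0) := by
    simpa only [div_eq_mul_inv, mul_zero] using
      ((tendsto_exp_neg_sq_div_atTop hs).const_mul (-s)).mul tendsto_inv_atTop_zero
  calc s * exp (-c ^ 2 / (2 * s)) / c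
      = ∫ u in Ioi c, (1 + s / u ^ 2) * exp (-u ^ 2 / (2 * s)) := by
        rw [integral_Ioi_of_hasDerivAt_of_nonneg' hderiv hpos hlim]
        ring
    _ ≤ ∫ u in Ioi c, (1 + s / c ^ 2) * exp (-u ^ 2 / (2 * s)) := by
        refine setIntegral_mono_on (integrableOn_Ioi_deriv_of_nonneg' hderiv hpos hlim)
          ((integrableOn_exp_neg_sq_div hs c).const_mul _) measurableSet_Ioi fun u hu ↦ ?_
        have hcu : c ^ 2 ≤ u ^ 2 := pow_le_pow_left₀ hc.le hu.le 2
        gcongr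
    _ = (1 + s / c ^ 2) * ∫ u in Ioi c, exp (-u ^ 2 / (2 * s)) := integral_const_mul _ _

end GaussianTail

lemma exp_sq_div_mul_exp_neg_sq_div (x s : ℝ) :
    exp (x ^ 2 / (2 * s)) * exp (-x ^ 2 / (2 * s)) = 1 := by
  rw [← exp_add, neg_div, add_neg_cancel, exp_zero]

lemma integral_exp_bridge_eq (x s : ℝ) :
    ∫ y in Ioi 0, exp (-(2 * x * y + y ^ 2) / (2 * s)) =
      exp (x ^ 2 / (2 * s)) * ∫ u in Ioi x, exp (-u ^ 2 / (2 * s)) := by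
  rw [← integral_const_mul, ← zero_add x, ← setIntegral_Ioi_comp_add_right, zero_add]
  congr 1 with y
  rw [← exp_add]
  congr 1
  ring

section BridgeIntegral

variable {x s : ℝ}

theorem mul_integral_exp_bridge_le (hs : 0 < s) (hx : 0 < x) :
    x * ∫ y in Ioi 0, exp (-(2 * x * y + y ^ 2) / (2 * s)) ≤ s := by
  rw [integral_exp_bridge_eq, mul_left_comm]
  calc exp (x ^ 2 / (2 * s)) * (x * ∫ u in Ioi x, exp (-u ^ 2 / (2 * s)))
      ≤ exp (x ^ 2 / (2 * s)) * (s * exp (-x ^ 2 / (2 * s))) :=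
        mul_le_mul_of_nonneg_left (mul_integral_exp_neg_sq_div_le hs hx) (exp_pos _).le
    _ = s := by rw [mul_left_comm, exp_sq_div_mul_exp_neg_sq_div, mul_one]

theorem div_le_mul_integral_exp_bridge (hs : 0 < s) (hx : 0 < x) :
    s / x ≤ (1 + s / x ^ 2) * ∫ y in Ioi 0, exp (-(2 * x * y + y ^ 2) / (2 * s)) := by
  rw [integral_exp_bridge_eq, mul_left_comm]
  calc s / x = exp (x ^ 2 / (2 * s)) * (s * exp (-x ^ 2 / (2 * s)) / x) := by
        rw [mul_div_assoc', mul_left_comm, exp_sq_div_mul_exp_neg_sq_div, mul_one]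
    _ ≤ exp (x ^ 2 / (2 * s)) * ((1 + s / x ^ 2) * ∫ u in Ioi x, exp (-u ^ 2 / (2 * s))) :=
        mul_le_mul_of_nonneg_left (div_le_mul_integral_exp_neg_sq_div hs hx) (exp_pos _).le

end BridgeIntegral

/-- Key inequality for the expected Brownian-bridge hitting time: if `0 < a < x`, `Δτ > 0`,
and `E[T_a] = a·∫₀^∞ exp(−(2xy + y²)/(2Δτ)) dy`, then
`1/(1 + x⁻²Δτ) ≤ E[T_a]/((a/x)Δτ) ≤ 1`. -/
theorem exit_time_inequality (a x Δτ ETa : ℝ) (ha : 0 < a) (hax : a < x) (hΔτ : 0 < Δτ)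
    (hETa : ETa = a * ∫ y in Set.Ioi (0 : ℝ), Real.exp (-(2 * x * y + y ^ 2) / (2 * Δτ))) :
    1 / (1 + (x ^ 2)⁻¹ * Δτ) ≤ ETa / ((a / x) * Δτ) ∧ ETa / ((a / x) * Δτ) ≤ 1 := by
  have hx : 0 < x := ha.trans hax
  have hupper := mul_integral_exp_bridge_le hΔτ hx
  have hlower := div_le_mul_integral_exp_bridge hΔτ hx
  generalize (∫ y in Ioi 0, exp (-(2 * x * y + y ^ 2) / (2 * Δτ))) = J at hupper hlower hETa
  have hratio : ETa / ((a / x) * Δτ) = x * J / Δτ := by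
    rw [hETa]
    field_simp
  rw [hratio, div_le_div_iff₀ (by positivity) hΔτ, div_le_one hΔτ]
  refine ⟨?_, hupper⟩
  calc 1 * Δτ = x * (Δτ / x) := by field_simp
    _ ≤ x * ((1 + Δτ / x ^ 2) * J) := by gcongr
    _ = x * J * (1 + (x ^ 2)⁻¹ * Δτ) := by ring
end

section
/- If E ∼ Exp(1) and Δτ > 0 and x ∈ ℝ, then the random variable M = (1/2)(x + √(x² + 2Δτ·E)) satisfies, for every m ≥ max(x, 0), P(M > m) = exp(−2m(m − x)/Δτ). -/
open MeasureTheory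

theorem lt_half_mul_add_sqrt_iff {x m c e : ℝ} (hc : 0 < c) (hm : max x 0 ≤ m) :
    m < 1 / 2 * (x + √(x ^ 2 + 2 * c * e)) ↔ 2 * m * (m - x) / c < e := by
  have hmx : x ≤ m := le_of_max_le_left hm
  have hm0 : 0 ≤ m := le_of_max_le_right hm
  calc m < 1 / 2 * (x + √(x ^ 2 + 2 * c * e)) ↔ 2 * m - x < √(x ^ 2 + 2 * c * e) := by
        constructor <;> intro h <;> linarith
    _ ↔ (2 * m - x) ^ 2 < x ^ 2 + 2 * c * e := Real.lt_sqrt (by linarith)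
    _ ↔ 2 * m * (m - x) < e * c := by constructor <;> intro h <;> nlinarith
    _ ↔ 2 * m * (m - x) / c < e := (div_lt_iff₀ hc).symm

theorem max_sampling_tail_general {Ω : Type*} [MeasurableSpace Ω] (μ : Measure Ω)
    (E : Ω → ℝ)
    (hE : ∀ t : ℝ, 0 ≤ t → μ {ω | t < E ω} = ENNReal.ofReal (Real.exp (-t)))
    (x Δτ : ℝ) (hΔτ : 0 < Δτ) :
    ∀ m : ℝ, max x 0 ≤ m →
      μ {ω | m < (1 / 2) * (x + Real.sqrt (x ^ 2 + 2 * Δτ * E ω))} =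
        ENNReal.ofReal (Real.exp (-2 * m * (m - x) / Δτ)) := by
  intro m hm
  have hthreshold : 0 ≤ 2 * m * (m - x) / Δτ := by
    have : 0 ≤ m - x := sub_nonneg.mpr (le_of_max_le_left hm)
    have : 0 ≤ m := le_of_max_le_right hm
    positivity
  have hset : {ω | m < (1 / 2) * (x + Real.sqrt (x ^ 2 + 2 * Δτ * E ω))} =
      {ω | 2 * m * (m - x) / Δτ < E ω} :=
    Set.ext fun _ => lt_half_mul_add_sqrt_iff hΔτ hm
  rw [hset, hE _ hthreshold, neg_mul, neg_mul, neg_div]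

/-- If `E ∼ Exp(1)`, `Δτ > 0` and `x ∈ ℝ`, then `M = (1/2)(x + √(x² + 2Δτ·E))` satisfies
`P(M > m) = exp(−2m(m−x)/Δτ)` for every `m ≥ max(x, 0)`. -/
theorem max_sampling_tail {Ω : Type*} [MeasurableSpace Ω] (μ : Measure Ω)
    [IsProbabilityMeasure μ] (E : Ω → ℝ) (hE0 : ∀ ω, 0 ≤ E ω)
    (hE : ∀ t : ℝ, 0 ≤ t → μ {ω | t < E ω} = ENNReal.ofReal (Real.exp (-t)))
    (x Δτ : ℝ) (hΔτ : 0 < Δτ) :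
    ∀ m : ℝ, max x 0 ≤ m →
      μ {ω | m < (1 / 2) * (x + Real.sqrt (x ^ 2 + 2 * Δτ * E ω))} =
        ENNReal.ofReal (Real.exp (-2 * m * (m - x) / Δτ)) :=
  max_sampling_tail_general μ E hE x Δτ hΔτ
end

section
/- Reflection principle: for standard one-dimensional Brownian motion B with B(0) = 0 and any a > 0 and t > 0, P(max_{0 ≤ s ≤ t} B(s) ≥ a) = 2·P(B(t) ≥ a). -/
open MeasureTheory

/-- A standard one-dimensional Brownian motion started at `0`: measurable marginals,
continuous paths, Gaussian increments, and independent increments. -/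
structure IsBrownianMotion {Ω : Type*} [MeasurableSpace Ω] (μ : Measure Ω)
    (B : ℝ → Ω → ℝ) : Prop where
  measurable : ∀ t : ℝ, Measurable (B t)
  cont : ∀ ω, Continuous fun t => B t ω
  init : ∀ ω, B 0 ω = 0
  increment : ∀ s t : ℝ, 0 ≤ s → s ≤ t →
    Measure.map (fun ω => B t ω - B s ω) μ =
      ProbabilityTheory.gaussianReal 0 (Real.toNNReal (t - s))
  indep : ∀ (n : ℕ) (t : ℕ → ℝ), Monotone t → (∀ i, 0 ≤ t i) →
    ProbabilityTheory.iIndepFun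
      (fun i : Fin n => fun ω => B (t (i + 1)) ω - B (t i) ω) μ

open MeasureTheory ProbabilityTheory Filter Set
open scoped NNReal ENNReal Topology

/-!
On the grid `k t / n` the increments of `B` are independent centred Gaussians, so their joint law
is invariant under flipping the signs of all increments after any fixed step, hence also after the
first step `τ` at which the walk `S_k = B (k t / n)` exceeds `b`. Comparing paths with their
reflections at `τ` gives `P(max_{k ≤ n} S_k > b) ≤ 2 P(S_n ≥ b)` and, up to the probability that
some increment exceeds `δ` (the overshoot at `τ`), `2 P(S_n ≥ b + 2δ) ≤ P(max_{k ≤ n} S_k > b)`.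
As `n → ∞`, continuity of the paths turns the grid maximum into the supremum over `[0, t]`, and
uniform continuity makes large increments disappear. Letting `δ → 0` and using that `B t` has no
atoms gives `P(sup B > b) = 2 P(B t ≥ b)` for `b ≥ 0`; letting `b ↑ a` gives the claim.
-/

namespace RandomWalk

variable {n : ℕ}

noncomputable def partialSum (x : Fin n → ℝ) (k : ℕ) : ℝ :=
  ∑ i : Fin n with i.val < k, x i

@[simp]
lemma partialSum_zero (x : Fin n → ℝ) : partialSum x 0 = 0 := by
  simp [partialSum]

lemma partialSum_succ (x : Fin n → ℝ) {k : ℕ} (hk : k < n) :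
    partialSum x (k + 1) = partialSum x k + x ⟨k, hk⟩ := by
  have : (Finset.univ.filter fun i : Fin n => (i : ℕ) < k + 1) =
      insert ⟨k, hk⟩ (Finset.univ.filter fun i : Fin n => (i : ℕ) < k) := by
    ext i
    simp only [Order.lt_add_one_iff, Finset.mem_filter, Finset.mem_univ, true_and,
      Finset.mem_insert, Fin.ext_iff]
    omega
  rw [partialSum, this, Finset.sum_insert (by simp), add_comm]
  rfl

lemma partialSum_sub (f : ℕ → ℝ) {k : ℕ} (hk : k ≤ n) :
    partialSum (fun i : Fin n => f (i + 1) - f i) k = f k - f 0 := by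
  induction k with
  | zero => simp
  | succ k ih =>
    rw [partialSum_succ _ hk, ih (by omega)]
    ring

lemma measurable_partialSum (k : ℕ) : Measurable fun x : Fin n → ℝ => partialSum x k :=
  Finset.measurable_sum _ fun i _ => measurable_pi_apply i

def reflectFrom (k : ℕ) (x : Fin n → ℝ) : Fin n → ℝ :=
  fun i => if k ≤ (i : ℕ) then -x i else x i

lemma reflectFrom_reflectFrom (k : ℕ) (x : Fin n → ℝ) : reflectFrom k (reflectFrom k x) = x := by
  ext i
  by_cases h : k ≤ (i : ℕ) <;> simp [reflectFrom, h]

lemma measurable_reflectFrom (k : ℕ) : Measurable (reflectFrom k : (Fin n → ℝ) → Fin n → ℝ) :=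
  measurable_pi_lambda _ fun i => by
    by_cases h : k ≤ (i : ℕ) <;> simp only [reflectFrom, h, if_true, if_false]
    exacts [(measurable_pi_apply i).neg, measurable_pi_apply i]

lemma partialSum_reflectFrom_of_le (x : Fin n → ℝ) {j k : ℕ} (hjk : j ≤ k) :
    partialSum (reflectFrom k x) j = partialSum x j :=
  Finset.sum_congr rfl fun i hi => by
    have : ¬ k ≤ (i : ℕ) := by simp only [Finset.mem_filter, Finset.mem_univ, true_and] at hi; omega
    simp [reflectFrom, this]

lemma partialSum_reflectFrom_last (k : ℕ) (x : Fin n → ℝ) :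
    partialSum (reflectFrom k x) n = 2 * partialSum x k - partialSum x n := by
  have hx : ∀ i : Fin n, reflectFrom k x i = 2 * (if i.val < k then x i else 0) - x i := by
    intro i
    by_cases h : k ≤ (i : ℕ)
    · simp [reflectFrom, h, not_lt.2 h]
    · simp only [reflectFrom, h, if_false, if_pos (not_le.1 h)]
      ring
  simp only [partialSum, Fin.is_lt, Finset.filter_true, hx, Finset.sum_sub_distrib,
    ← Finset.mul_sum, Finset.sum_ite, Finset.sum_const_zero, add_zero]

lemma measurePreserving_reflectFrom_pi {ν : Fin n → Measure ℝ} [∀ i, SigmaFinite (ν i)]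
    (hν : ∀ i, MeasurePreserving Neg.neg (ν i) (ν i)) (k : ℕ) :
    MeasurePreserving (reflectFrom k) (Measure.pi ν) (Measure.pi ν) := by
  convert measurePreserving_pi ν ν (f := fun i => if k ≤ (i : ℕ) then Neg.neg else id)
    fun i => by split_ifs; exacts [hν i, MeasurePreserving.id _] using 1
  ext x i
  by_cases h : k ≤ (i : ℕ) <;> simp [reflectFrom, h]

lemma measurableSet_exists_le_apply (δ : ℝ) : MeasurableSet {x : Fin n → ℝ | ∃ i, δ ≤ x i} := by
  simp_rw [ofPred_exists]
  exact .iUnion fun i => measurableSet_le measurable_const (measurable_pi_apply i)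

def passesAbove (b : ℝ) : Set (Fin n → ℝ) := {x | ∃ k ≤ n, b < partialSum x k}

lemma measurableSet_passesAbove (b : ℝ) : MeasurableSet (passesAbove (n := n) b) := by
  simp_rw [passesAbove, ofPred_exists, ofPred_and]
  exact .iUnion fun k => (MeasurableSet.const _).inter
    (measurableSet_lt measurable_const (measurable_partialSum k))

/-- The first step at which the walk is strictly above `b`, capped at `n`: if there is none,
reflecting at this step is the identity. -/
noncomputable def firstPassage (b : ℝ) (x : Fin n → ℝ) : ℕ := by
  classical exact Nat.find (⟨n, .inr le_rfl⟩ : ∃ k, b < partialSum x k ∨ n ≤ k)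

noncomputable def reflectAtFirstPassage (b : ℝ) (x : Fin n → ℝ) : Fin n → ℝ :=
  reflectFrom (firstPassage b x) x

variable {b : ℝ}

lemma firstPassage_le (x : Fin n → ℝ) : firstPassage b x ≤ n := by
  classical exact Nat.find_min' _ (.inr le_rfl)

lemma partialSum_le_of_lt_firstPassage {x : Fin n → ℝ} {j : ℕ} (hj : j < firstPassage b x) :
    partialSum x j ≤ b := by
  classical exact not_lt.1 fun h => Nat.find_min _ hj (.inl h)

lemma mem_passesAbove_iff {x : Fin n → ℝ} :
    x ∈ passesAbove b ↔ b < partialSum x (firstPassage b x) := by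
  classical
  refine ⟨fun ⟨k, hkn, hk⟩ => ?_, fun h => ⟨_, firstPassage_le x, h⟩⟩
  have hle : firstPassage b x ≤ k := Nat.find_min' _ (.inl hk)
  rcases (Nat.find_spec (⟨n, .inr le_rfl⟩ : ∃ k, b < partialSum x k ∨ n ≤ k)) with h | h
  · exact h
  · have : firstPassage b x = k := le_antisymm hle (hkn.trans h)
    rwa [this]

lemma firstPassage_eq_of_partialSum_eq {x y : Fin n → ℝ}
    (hxy : ∀ j ≤ firstPassage b x, partialSum y j = partialSum x j) :
    firstPassage b y = firstPassage b x := by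
  classical
  have hx := (Nat.find_eq_iff _).1 (rfl : firstPassage b x = _)
  refine (Nat.find_eq_iff _).2 ⟨?_, fun j hj => ?_⟩
  · rw [hxy _ le_rfl]
    exact hx.1
  · rw [hxy _ hj.le]
    exact hx.2 j hj

lemma firstPassage_reflectFrom_eq_iff {x : Fin n → ℝ} {k : ℕ} :
    firstPassage b (reflectFrom k x) = k ↔ firstPassage b x = k := by
  have key : ∀ y : Fin n → ℝ,
      firstPassage b (reflectFrom (firstPassage b y) y) = firstPassage b y :=
    fun y => firstPassage_eq_of_partialSum_eq fun j hj => partialSum_reflectFrom_of_le y hj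
  constructor
  · intro h
    simpa [h, reflectFrom_reflectFrom] using key (reflectFrom k x)
  · rintro rfl
    exact key x

lemma measurable_firstPassage (b : ℝ) : Measurable (firstPassage (n := n) b) := by
  classical
  exact measurable_find _ fun k =>
    (measurableSet_lt measurable_const (measurable_partialSum k)).union (MeasurableSet.const _)

lemma measurable_reflectAtFirstPassage (b : ℝ) : Measurable (reflectAtFirstPassage (n := n) b) := by
  classical
  exact Measurable.find (f := fun k => reflectFrom k)
    (p := fun k x => b < partialSum x k ∨ n ≤ k) measurable_reflectFrom (fun k =>
    (measurableSet_lt measurable_const (measurable_partialSum k)).union (MeasurableSet.const _)) _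

lemma preimage_reflectAtFirstPassage_inter (b : ℝ) (A : Set (Fin n → ℝ)) (k : ℕ) :
    reflectAtFirstPassage b ⁻¹' A ∩ firstPassage b ⁻¹' {k} =
      reflectFrom k ⁻¹' (A ∩ firstPassage b ⁻¹' {k}) := by
  ext x
  simp only [mem_inter_iff, mem_preimage, mem_singleton_iff, firstPassage_reflectFrom_eq_iff,
    reflectAtFirstPassage]
  exact and_congr_left fun h => by rw [h]

theorem measurePreserving_reflectAtFirstPassage {P : Measure (Fin n → ℝ)}
    (hP : ∀ k, MeasurePreserving (reflectFrom k) P P) (b : ℝ) :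
    MeasurePreserving (reflectAtFirstPassage b) P P := by
  have hfib : ∀ k, MeasurableSet (firstPassage b ⁻¹' {k} : Set (Fin n → ℝ)) := fun k =>
    measurable_firstPassage b (measurableSet_singleton k)
  have hsplit : ∀ s, MeasurableSet s → P s = ∑' k, P (s ∩ firstPassage b ⁻¹' {k}) := fun s hs => by
    rw [← measure_iUnion (fun i j hij => ((disjoint_singleton.2 hij).preimage _).mono
      inter_subset_right inter_subset_right) fun k => hs.inter (hfib k), ← inter_iUnion,
      ← preimage_iUnion, iUnion_singleton_eq_range, range_id', preimage_univ, inter_univ]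
  refine ⟨measurable_reflectAtFirstPassage b, Measure.ext fun A hA => ?_⟩
  have hR := measurable_reflectAtFirstPassage (n := n) b hA
  rw [Measure.map_apply (measurable_reflectAtFirstPassage b) hA, hsplit _ hR, hsplit _ hA]
  congr 1 with k
  rw [preimage_reflectAtFirstPassage_inter,
    (hP k).measure_preimage (hA.inter (hfib k)).nullMeasurableSet]

lemma reflectAtFirstPassage_mem_passesAbove_iff {x : Fin n → ℝ} :
    reflectAtFirstPassage b x ∈ passesAbove b ↔ x ∈ passesAbove b := by
  have hτ : firstPassage b (reflectAtFirstPassage b x) = firstPassage b x :=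
    firstPassage_reflectFrom_eq_iff.2 rfl
  rw [mem_passesAbove_iff, mem_passesAbove_iff, hτ, reflectAtFirstPassage,
    partialSum_reflectFrom_of_le x le_rfl]

lemma partialSum_firstPassage_lt_add (hb : 0 ≤ b) {δ : ℝ} {x : Fin n → ℝ}
    (hx : x ∈ passesAbove b) (hδ : ∀ i, x i < δ) :
    partialSum x (firstPassage b x) < b + δ := by
  have hpass := mem_passesAbove_iff.1 hx
  obtain ⟨j, hj⟩ : ∃ j, firstPassage b x = j + 1 :=
    Nat.exists_eq_succ_of_ne_zero fun h => by
      simp only [h, partialSum_zero] at hpass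
      linarith
  have hjn : j < n := by have := firstPassage_le (b := b) x; omega
  rw [hj, partialSum_succ x hjn]
  linarith [partialSum_le_of_lt_firstPassage (b := b) (x := x) (j := j) (by omega), hδ ⟨j, hjn⟩]

variable {P : Measure (Fin n → ℝ)} (hP : ∀ k, MeasurePreserving (reflectFrom k) P P)
include hP

theorem measure_passesAbove_le (b : ℝ) :
    P (passesAbove b) ≤ 2 * P {x | b ≤ partialSum x n} := by
  have hsub : passesAbove b ⊆ {x : Fin n → ℝ | b ≤ partialSum x n} ∪
      reflectAtFirstPassage b ⁻¹' {x | b ≤ partialSum x n} := by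
    intro x hx
    have hpass := mem_passesAbove_iff.1 hx
    by_cases h : b ≤ partialSum x n
    · exact .inl h
    · right
      simp only [mem_preimage, mem_ofPred_eq, reflectAtFirstPassage, partialSum_reflectFrom_last]
      linarith
  calc P (passesAbove b)
      ≤ P {x | b ≤ partialSum x n} + P (reflectAtFirstPassage b ⁻¹' {x | b ≤ partialSum x n}) :=
        (measure_mono hsub).trans (measure_union_le _ _)
    _ = 2 * P {x | b ≤ partialSum x n} := by
      rw [(measurePreserving_reflectAtFirstPassage hP b).measure_preimage
        (measurableSet_le measurable_const (measurable_partialSum n)).nullMeasurableSet, two_mul]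

theorem two_mul_measure_le_measure_passesAbove_add (hb : 0 ≤ b) {δ : ℝ} (hδ : 0 < δ) :
    2 * P {x | b + 2 * δ ≤ partialSum x n} ≤ P (passesAbove b) + P {x | ∃ i, δ ≤ x i} := by
  set E := {x : Fin n → ℝ | b + 2 * δ ≤ partialSum x n}
  set C := {x : Fin n → ℝ | b ≤ partialSum x n}
  have hE : E ⊆ passesAbove b ∩ C := fun x hx =>
    ⟨⟨n, le_rfl, by simp only [E, mem_ofPred_eq] at hx; linarith⟩,
      by simp only [E, C, mem_ofPred_eq] at hx ⊢; linarith⟩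
  -- A path ending above `b + 2δ`, reflected at its first passage above `b`, ends below `b`
  -- unless it overshoots `b` by at least `δ` at that step.
  have hRE : reflectAtFirstPassage b ⁻¹' E ⊆ (passesAbove b \ C) ∪ {x | ∃ i, δ ≤ x i} := by
    intro x hx
    simp only [E, mem_preimage, mem_ofPred_eq, reflectAtFirstPassage,
      partialSum_reflectFrom_last] at hx
    have hpass : x ∈ passesAbove b := reflectAtFirstPassage_mem_passesAbove_iff.1
      ⟨n, le_rfl, by rw [reflectAtFirstPassage, partialSum_reflectFrom_last]; linarith⟩
    by_cases hjump : ∃ i, δ ≤ x i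
    · exact .inr hjump
    · push Not at hjump
      have hovershoot := partialSum_firstPassage_lt_add hb hpass hjump
      exact .inl ⟨hpass, by simp only [C, mem_ofPred_eq]; linarith⟩
  have hC : MeasurableSet C := measurableSet_le measurable_const (measurable_partialSum n)
  calc 2 * P E = P E + P (reflectAtFirstPassage b ⁻¹' E) := by
        rw [(measurePreserving_reflectAtFirstPassage hP b).measure_preimage
          (measurableSet_le measurable_const (measurable_partialSum n)).nullMeasurableSet, two_mul]
    _ ≤ P (passesAbove b ∩ C) + (P (passesAbove b \ C) + P {x | ∃ i, δ ≤ x i}) :=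
        add_le_add (measure_mono hE) ((measure_mono hRE).trans (measure_union_le _ _))
    _ = P (passesAbove b) + P {x | ∃ i, δ ≤ x i} := by
        rw [← add_assoc, measure_inter_add_sdiff _ hC]

end RandomWalk

lemma natCast_mul_div_mem_Icc {t : ℝ} (ht : 0 ≤ t) {k n : ℕ} (hk : k ≤ n) :
    (k : ℝ) * t / n ∈ Icc 0 t := by
  refine ⟨by positivity, ?_⟩
  rcases n.eq_zero_or_pos with rfl | hn
  · simpa using ht
  · rw [div_le_iff₀ (by positivity), mul_comm t]
    gcongr

lemma exists_abs_sub_natCast_mul_div_lt {t s : ℝ} (ht : 0 < t) (hs : s ∈ Icc 0 t) {n : ℕ}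
    (hn : 0 < n) :
    ∃ k ≤ n, |s - k * t / n| < t / n := by
  have hn' : (0 : ℝ) < n := by exact_mod_cast hn
  refine ⟨⌊s * n / t⌋₊, Nat.floor_le_of_le ?_, ?_⟩
  · rw [div_le_iff₀ ht]
    nlinarith [hs.2]
  · set k := ⌊s * n / t⌋₊
    have hlow : k * t / n ≤ s := by
      have := Nat.floor_le (a := s * n / t) (by have := hs.1; positivity)
      rw [le_div_iff₀ ht] at this
      rwa [div_le_iff₀ hn']
    have hup : s < k * t / n + t / n := by
      have := Nat.lt_floor_add_one (s * n / t)
      rw [div_lt_iff₀ ht] at this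
      rw [← add_div, lt_div_iff₀ hn']
      linarith
    rw [abs_sub_lt_iff]
    constructor <;> linarith [div_pos ht hn']

namespace Continuous

variable {f : ℝ → ℝ} (hf : Continuous f) {t : ℝ}
include hf

lemma eventually_exists_lt_iff_lt_iSup (ht : 0 < t) (b : ℝ) :
    ∀ᶠ n : ℕ in atTop, (∃ k ≤ n, b < f (k * t / n)) ↔ b < ⨆ s : Icc 0 t, f s := by
  have : Nonempty (Icc 0 t) := ⟨⟨0, left_mem_Icc.2 ht.le⟩⟩
  have hbdd : BddAbove (range fun s : Icc 0 t => f s) := by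
    rw [← image_eq_range]
    exact isCompact_Icc.bddAbove_image hf.continuousOn
  by_cases hb : b < ⨆ s : Icc 0 t, f s
  · obtain ⟨⟨s, hs⟩, hbs⟩ := exists_lt_of_lt_ciSup hb
    obtain ⟨ε, hε, hball⟩ := Metric.eventually_nhds_iff.1
      (hf.continuousAt.eventually (lt_mem_nhds hbs))
    filter_upwards [(tendsto_const_div_atTop_nhds_zero_nat t).eventually (gt_mem_nhds hε),
      eventually_gt_atTop 0] with n hmesh hn
    obtain ⟨k, hk, hks⟩ := exists_abs_sub_natCast_mul_div_lt ht hs hn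
    refine iff_of_true ⟨k, hk, hball ?_⟩ hb
    rw [Real.dist_eq, abs_sub_comm]
    exact hks.trans hmesh
  · refine Eventually.of_forall fun n => iff_of_false ?_ hb
    rintro ⟨k, hk, hbk⟩
    exact hb (hbk.trans_le (le_ciSup hbdd ⟨_, natCast_mul_div_mem_Icc ht.le hk⟩))

lemma eventually_forall_sub_lt (ht : 0 ≤ t) {δ : ℝ} (hδ : 0 < δ) :
    ∀ᶠ n : ℕ in atTop, ∀ i : Fin n, f ((i + 1 : ℕ) * t / n) - f ((i : ℕ) * t / n) < δ := by
  obtain ⟨η, hη, hunif⟩ := Metric.uniformContinuousOn_iff.1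
    (isCompact_Icc.uniformContinuousOn_of_continuous hf.continuousOn) δ hδ
  filter_upwards [(tendsto_const_div_atTop_nhds_zero_nat t).eventually (gt_mem_nhds hη)]
    with n hmesh i
  have hdist := hunif _ (natCast_mul_div_mem_Icc ht i.is_lt) _
    (natCast_mul_div_mem_Icc ht i.is_lt.le) ?_
  · exact (le_abs_self _).trans_lt (Real.dist_eq _ _ ▸ hdist)
  · rw [Real.dist_eq, ← sub_div, Nat.cast_succ, add_mul, one_mul, add_sub_cancel_left,
      abs_of_nonneg (by positivity)]
    exact hmesh

end Continuous

lemma measurePreserving_neg_gaussianReal (v : ℝ≥0) :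
    MeasurePreserving Neg.neg (gaussianReal 0 v) (gaussianReal 0 v) :=
  ⟨measurable_neg, by simpa using gaussianReal_map_neg (μ := 0) (v := v)⟩

lemma tendsto_measure_le_of_tendsto {Ω ι : Type*} [MeasurableSpace Ω] {μ : Measure Ω}
    [IsFiniteMeasure μ] {X : Ω → ℝ} (hX : Measurable X) {a : ℝ} (ha : μ (X ⁻¹' {a}) = 0)
    {L : Filter ι} [L.IsCountablyGenerated] {c : ι → ℝ} (hc : Tendsto c L (𝓝 a)) :
    Tendsto (fun i => μ {ω | c i ≤ X ω}) L (𝓝 (μ {ω | a ≤ X ω})) := by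
  refine tendsto_measure_of_ae_tendsto_indicator_of_isFiniteMeasure L
    (measurableSet_le measurable_const hX) (fun i => measurableSet_le measurable_const hX) ?_
  filter_upwards [measure_eq_zero_iff_ae_notMem.1 ha] with ω hω
  rcases lt_or_gt_of_ne hω with h | h
  · filter_upwards [hc.eventually (lt_mem_nhds h)] with i hi
    exact iff_of_false (not_le.2 hi) (not_le.2 h)
  · filter_upwards [hc.eventually (gt_mem_nhds h)] with i hi
    exact iff_of_true hi.le h.le

noncomputable def gridIncrements {Ω : Type*} (B : ℝ → Ω → ℝ) (t : ℝ) (n : ℕ) (ω : Ω) : Fin n → ℝ :=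
  fun i => B ((i + 1 : ℕ) * t / n) ω - B ((i : ℕ) * t / n) ω

namespace IsBrownianMotion

open RandomWalk

variable {Ω : Type*} [MeasurableSpace Ω] {μ : Measure Ω} {B : ℝ → Ω → ℝ}
  (hB : IsBrownianMotion μ B)
include hB

lemma map_eq_gaussianReal {t : ℝ} (ht : 0 ≤ t) : μ.map (B t) = gaussianReal 0 t.toNNReal := by
  simpa [hB.init] using hB.increment 0 t le_rfl ht

lemma measure_preimage_singleton_eq_zero {t : ℝ} (ht : 0 < t) (a : ℝ) : μ (B t ⁻¹' {a}) = 0 := by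
  rw [← Measure.map_apply (hB.measurable t) (measurableSet_singleton a),
    hB.map_eq_gaussianReal ht.le]
  exact gaussianReal_absolutelyContinuous 0 (by simpa using ht) (measure_singleton a)

lemma measurable_gridIncrements (t : ℝ) (n : ℕ) : Measurable (gridIncrements B t n) :=
  measurable_pi_lambda _ fun _ => (hB.measurable _).sub (hB.measurable _)

lemma partialSum_gridIncrements (t : ℝ) {n k : ℕ} (hk : k ≤ n) (ω : Ω) :
    partialSum (gridIncrements B t n ω) k = B (k * t / n) ω := by
  refine (partialSum_sub (fun k : ℕ => B (k * t / n) ω) hk).trans ?_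
  simp [hB.init]

lemma map_gridIncrements {t : ℝ} (ht : 0 ≤ t) (n : ℕ) :
    μ.map (gridIncrements B t n) = Measure.pi fun _ => gaussianReal 0 (t / n).toNNReal := by
  have hmono : Monotone fun k : ℕ => k * t / n := fun j k hjk => by
    dsimp only
    gcongr
  have hindep := hB.indep n (fun k : ℕ => k * t / n) hmono fun k => by positivity
  refine (hindep.map_fun_eq_pi_map fun i =>
    ((hB.measurable _).sub (hB.measurable _)).aemeasurable).trans ?_
  congr 1 with i : 1
  refine (hB.increment _ _ (by positivity) (hmono (Nat.le_succ i))).trans ?_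
  congr
  push_cast
  ring

lemma measurePreserving_reflectFrom_map_gridIncrements {t : ℝ} (ht : 0 ≤ t) (n k : ℕ) :
    MeasurePreserving (reflectFrom k) (μ.map (gridIncrements B t n))
      (μ.map (gridIncrements B t n)) := by
  rw [hB.map_gridIncrements ht]
  exact measurePreserving_reflectFrom_pi (fun _ => measurePreserving_neg_gaussianReal _) k

lemma preimage_gridIncrements_passesAbove (t b : ℝ) (n : ℕ) :
    gridIncrements B t n ⁻¹' passesAbove b = {ω | ∃ k ≤ n, b < B (k * t / n) ω} := by
  ext ω
  exact exists_congr fun k => and_congr_right fun hk => by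
    rw [hB.partialSum_gridIncrements t hk]

lemma preimage_gridIncrements_le_partialSum (t c : ℝ) {n : ℕ} (hn : n ≠ 0) :
    gridIncrements B t n ⁻¹' {x | c ≤ partialSum x n} = {ω | c ≤ B t ω} := by
  ext ω
  rw [mem_preimage, mem_ofPred_eq, hB.partialSum_gridIncrements t le_rfl,
    mul_div_cancel_left₀ t (Nat.cast_ne_zero.2 hn)]
  rfl

lemma measure_exists_lt_le {t : ℝ} (ht : 0 ≤ t) {n : ℕ} (hn : n ≠ 0) (b : ℝ) :
    μ {ω | ∃ k ≤ n, b < B (k * t / n) ω} ≤ 2 * μ {ω | b ≤ B t ω} := by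
  have hF := hB.measurable_gridIncrements t n
  rw [← hB.preimage_gridIncrements_passesAbove, ← hB.preimage_gridIncrements_le_partialSum t b hn,
    ← Measure.map_apply hF (measurableSet_passesAbove b), ← Measure.map_apply hF
      (measurableSet_le measurable_const (measurable_partialSum n))]
  exact measure_passesAbove_le (hB.measurePreserving_reflectFrom_map_gridIncrements ht n) b

lemma two_mul_measure_le_measure_exists_lt_add {t : ℝ} (ht : 0 ≤ t) {n : ℕ} (hn : n ≠ 0) {b δ : ℝ}
    (hb : 0 ≤ b) (hδ : 0 < δ) :
    2 * μ {ω | b + 2 * δ ≤ B t ω} ≤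
      μ {ω | ∃ k ≤ n, b < B (k * t / n) ω} + μ {ω | ∃ i, δ ≤ gridIncrements B t n ω i} := by
  have hF := hB.measurable_gridIncrements t n
  rw [← hB.preimage_gridIncrements_passesAbove, ← hB.preimage_gridIncrements_le_partialSum t _ hn,
    ← Measure.map_apply hF (measurableSet_passesAbove b), ← Measure.map_apply hF
      (measurableSet_le measurable_const (measurable_partialSum n))]
  exact (two_mul_measure_le_measure_passesAbove_add
    (hB.measurePreserving_reflectFrom_map_gridIncrements ht n) hb hδ).trans_eq
    (congrArg _ (Measure.map_apply hF (measurableSet_exists_le_apply δ)))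

lemma tendsto_measure_exists_lt [IsFiniteMeasure μ] {t : ℝ} (ht : 0 < t) (b : ℝ) :
    Tendsto (fun n : ℕ => μ {ω | ∃ k ≤ n, b < B (k * t / n) ω}) atTop
      (𝓝 (μ {ω | b < ⨆ s : Icc 0 t, B s ω})) :=
  tendsto_measure_of_tendsto_indicator_of_isFiniteMeasure _ μ
    (fun n => hB.preimage_gridIncrements_passesAbove t b n ▸
      hB.measurable_gridIncrements t n (measurableSet_passesAbove b))
    fun ω => (hB.cont ω).eventually_exists_lt_iff_lt_iSup ht b

lemma tendsto_measure_exists_le_gridIncrements [IsFiniteMeasure μ] {t : ℝ} (ht : 0 ≤ t) {δ : ℝ}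
    (hδ : 0 < δ) :
    Tendsto (fun n => μ {ω | ∃ i, δ ≤ gridIncrements B t n ω i}) atTop (𝓝 0) := by
  simpa using tendsto_measure_of_tendsto_indicator_of_isFiniteMeasure _ μ (A := ∅)
    (fun n => hB.measurable_gridIncrements t n (measurableSet_exists_le_apply δ))
    fun ω => ((hB.cont ω).eventually_forall_sub_lt ht hδ).mono fun n hn =>
      iff_of_false (by rintro ⟨i, hi⟩; exact (hn i).not_ge hi) (notMem_empty ω)

theorem measure_lt_iSup_eq [IsProbabilityMeasure μ] {t : ℝ} (ht : 0 < t) {b : ℝ} (hb : 0 ≤ b) :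
    μ {ω | b < ⨆ s : Icc 0 t, B s ω} = 2 * μ {ω | b ≤ B t ω} := by
  refine le_antisymm ?_ ?_
  · exact le_of_tendsto (hB.tendsto_measure_exists_lt ht b)
      ((eventually_ne_atTop 0).mono fun n hn => hB.measure_exists_lt_le ht.le hn b)
  · have hshift : ∀ δ > 0,
        2 * μ {ω | b + 2 * δ ≤ B t ω} ≤ μ {ω | b < ⨆ s : Icc 0 t, B s ω} := fun δ hδ =>
      have hsum := (hB.tendsto_measure_exists_lt ht b).add
        (hB.tendsto_measure_exists_le_gridIncrements ht.le hδ)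
      ge_of_tendsto (by rwa [add_zero] at hsum) ((eventually_ne_atTop 0).mono fun n hn =>
        hB.two_mul_measure_le_measure_exists_lt_add ht.le hn hb hδ)
    have hlevel : Tendsto (fun δ : ℝ => b + 2 * δ) (𝓝[>] 0) (𝓝 b) :=
      tendsto_nhdsWithin_of_tendsto_nhds ((by fun_prop : Continuous fun δ : ℝ => b + 2 * δ).tendsto'
        0 b (by simp))
    have hlim : Tendsto (fun δ => 2 * μ {ω | b + 2 * δ ≤ B t ω}) (𝓝[>] 0)
        (𝓝 (2 * μ {ω | b ≤ B t ω})) :=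
      ENNReal.Tendsto.const_mul (tendsto_measure_le_of_tendsto (hB.measurable t)
        (hB.measure_preimage_singleton_eq_zero ht b) hlevel) (.inr ENNReal.ofNat_ne_top)
    exact le_of_tendsto hlim (eventually_mem_nhdsWithin.mono hshift)

end IsBrownianMotion

/-- Reflection principle: for standard Brownian motion `B` with `B(0) = 0`, `a > 0`, `t > 0`,
`P(max_{0 ≤ s ≤ t} B(s) ≥ a) = 2·P(B(t) ≥ a)`. -/
theorem reflection_principle {Ω : Type*} [MeasurableSpace Ω] (μ : Measure Ω)
    [IsProbabilityMeasure μ] (B : ℝ → Ω → ℝ) (hB : IsBrownianMotion μ B)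
    (a t : ℝ) (ha : 0 < a) (ht : 0 < t) :
    μ {ω | a ≤ ⨆ s : Set.Icc (0 : ℝ) t, B s ω} = 2 * μ {ω | a ≤ B t ω} := by
  refine le_antisymm ?_ ?_
  · have hlim : Tendsto (fun b => 2 * μ {ω | b ≤ B t ω}) (𝓝[<] a)
        (𝓝 (2 * μ {ω | a ≤ B t ω})) :=
      ENNReal.Tendsto.const_mul (tendsto_measure_le_of_tendsto (hB.measurable t)
        (hB.measure_preimage_singleton_eq_zero ht a)
        (tendsto_nhdsWithin_of_tendsto_nhds tendsto_id)) (.inr ENNReal.ofNat_ne_top)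
    refine ge_of_tendsto hlim ?_
    filter_upwards [Ioo_mem_nhdsLT ha] with b hb
    rw [← hB.measure_lt_iSup_eq ht hb.1.le]
    exact measure_mono fun ω hω => hb.2.trans_le hω
  · rw [← hB.measure_lt_iSup_eq ht ha.le]
    exact measure_mono fun ω (hω : a < _) => hω.le
end

section
/- Expected hitting time via local time: if T_a is the first hitting time of level a ∈ (0, x) by a Brownian bridge from 0 to x on [0, Δτ] with hitting density f_{T_a}(t) = a/(√(2π)·t^{3/2}·√(1 − t/Δτ))·exp(x²/(2Δτ) − (a−x)²/(2(Δτ−t)) − a²/(2t)), then E[T_a] = a·∫₀^{Δτ} ρ(t, a) dt, where ρ(t, a) = 1/(√(2π·t(Δτ−t)/Δτ))·exp(−(a − (t/Δτ)x)²·Δτ/(2t(Δτ−t))) is the density of the bridge position at level a at time t. -/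
open Real Set

noncomputable def bridgeHittingDensity (a x Δτ t : ℝ) : ℝ :=
  a / (√(2 * π) * t ^ ((3 : ℝ) / 2) * √(1 - t / Δτ)) *
    exp (x ^ 2 / (2 * Δτ) - (a - x) ^ 2 / (2 * (Δτ - t)) - a ^ 2 / (2 * t))

/-- Gaussian with mean `(t / Δτ) x` and variance `t (Δτ - t) / Δτ`, evaluated at `a`. -/
noncomputable def bridgeDensity (a x Δτ t : ℝ) : ℝ :=
  (√(2 * π * (t * (Δτ - t) / Δτ)))⁻¹ *
    exp (-(a - (t / Δτ) * x) ^ 2 * Δτ / (2 * (t * (Δτ - t))))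

lemma bridge_exponent_eq {K : Type*} [Field K] {a x Δτ t : K}
    (hΔτ : Δτ ≠ 0) (ht : t ≠ 0) (hΔτt : Δτ - t ≠ 0) :
    x ^ 2 / (2 * Δτ) - (a - x) ^ 2 / (2 * (Δτ - t)) - a ^ 2 / (2 * t) =
      -(a - (t / Δτ) * x) ^ 2 * Δτ / (2 * (t * (Δτ - t))) := by
  field_simp
  ring

lemma rpow_three_halves {t : ℝ} (ht : 0 ≤ t) : t ^ ((3 : ℝ) / 2) = t * √t := by
  rw [show (3 : ℝ) / 2 = 1 + 1 / 2 by norm_num, rpow_one_add' ht (by norm_num), sqrt_eq_rpow]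

lemma sqrt_bridge_variance {Δτ t : ℝ} (hΔτ : 0 < Δτ) (ht : 0 ≤ t) :
    √(2 * π * (t * (Δτ - t) / Δτ)) = √(2 * π) * (√t * √(1 - t / Δτ)) := by
  rw [← sqrt_mul ht, ← sqrt_mul (by positivity)]
  congr 1
  field_simp

theorem mul_bridgeHittingDensity_eq {a x Δτ t : ℝ} (ht : t ∈ Ioo 0 Δτ) :
    t * bridgeHittingDensity a x Δτ t = a * bridgeDensity a x Δτ t := by
  obtain ⟨ht0, htΔτ⟩ := ht
  have hΔτ : 0 < Δτ := ht0.trans htΔτ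
  have hsqrt_t : 0 < √t := sqrt_pos.mpr ht0
  have hsqrt_2π : 0 < √(2 * π) := sqrt_pos.mpr (by positivity)
  have hsqrt_1 : 0 < √(1 - t / Δτ) := sqrt_pos.mpr (by rwa [sub_pos, div_lt_one hΔτ])
  rw [bridgeHittingDensity, bridgeDensity, bridge_exponent_eq hΔτ.ne' ht0.ne' (by linarith),
    rpow_three_halves ht0.le, sqrt_bridge_variance hΔτ ht0.le]
  field_simp

theorem expected_hitting_time_local_time_general (a x Δτ : ℝ) (fTa ρ : ℝ → ℝ)
    (hfTa : ∀ t, fTa t = a / (Real.sqrt (2 * π) * t ^ ((3 : ℝ) / 2)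
        * Real.sqrt (1 - t / Δτ)) *
      Real.exp (x ^ 2 / (2 * Δτ) - (a - x) ^ 2 / (2 * (Δτ - t)) - a ^ 2 / (2 * t)))
    (hρ : ∀ t, ρ t = (Real.sqrt (2 * π * (t * (Δτ - t) / Δτ)))⁻¹ *
      Real.exp (-(a - (t / Δτ) * x) ^ 2 * Δτ / (2 * (t * (Δτ - t))))) :
    (∀ t ∈ Set.Ioo (0 : ℝ) Δτ, t * fTa t = a * ρ t) ∧
      ∫ t in Set.Ioo (0 : ℝ) Δτ, t * fTa t = a * ∫ t in Set.Ioo (0 : ℝ) Δτ, ρ t := by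
  obtain rfl : fTa = bridgeHittingDensity a x Δτ := funext hfTa
  obtain rfl : ρ = bridgeDensity a x Δτ := funext hρ
  have hpointwise : ∀ t ∈ Ioo (0 : ℝ) Δτ,
      t * bridgeHittingDensity a x Δτ t = a * bridgeDensity a x Δτ t :=
    fun _ ht ↦ mul_bridgeHittingDensity_eq ht
  refine ⟨hpointwise, ?_⟩
  rw [← MeasureTheory.integral_const_mul]
  exact MeasureTheory.setIntegral_congr_fun measurableSet_Ioo hpointwise

/-- Expected hitting time via local time: with the Brownian-bridge hitting density `f_{T_a}`
and bridge position density `ρ(t, a)`, one has the pointwise identity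
`t·f_{T_a}(t) = a·ρ(t, a)` on `(0, Δτ)`, whence `E[T_a] = a·∫₀^{Δτ} ρ(t, a) dt`. -/
theorem expected_hitting_time_local_time (a x Δτ : ℝ) (ha : 0 < a) (hax : a < x)
    (hΔτ : 0 < Δτ) (fTa ρ : ℝ → ℝ)
    (hfTa : ∀ t, fTa t = a / (Real.sqrt (2 * π) * t ^ ((3 : ℝ) / 2)
        * Real.sqrt (1 - t / Δτ)) *
      Real.exp (x ^ 2 / (2 * Δτ) - (a - x) ^ 2 / (2 * (Δτ - t)) - a ^ 2 / (2 * t)))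
    (hρ : ∀ t, ρ t = (Real.sqrt (2 * π * (t * (Δτ - t) / Δτ)))⁻¹ *
      Real.exp (-(a - (t / Δτ) * x) ^ 2 * Δτ / (2 * (t * (Δτ - t))))) :
    (∀ t ∈ Set.Ioo (0 : ℝ) Δτ, t * fTa t = a * ρ t) ∧
      ∫ t in Set.Ioo (0 : ℝ) Δτ, t * fTa t = a * ∫ t in Set.Ioo (0 : ℝ) Δτ, ρ t :=
  expected_hitting_time_local_time_general a x Δτ fTa ρ hfTa hρ
end
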